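/- arXiv:2403.08341 — 4 statements merged into one kernel-verified Lean document; each statement's English description precedes it below -/
import Mathlib

section
/- Let ρ : (a,b) → ℝ be C¹ and nowhere zero, θ_k, θ_ℓ : (a,b) → ℝ be C², λ_k, λ_ℓ ∈ ℝ with λ_k ≠ λ_ℓ. Assume ρθ_k'' + 2ρ'θ_k' = 0, ρθ_ℓ'' + 2ρ'θ_ℓ' = 0, and (θ_k')² − (θ_ℓ')² = λ_k − λ_ℓ on (a,b). Then ρ is constant on (a,b). -/
open Set

/-! Multiplying the phase equations by `θ_k'` and `θ_ℓ'` and subtracting gives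
`ρ (θ_k' θ_k'' - θ_ℓ' θ_ℓ'') + 2 ρ' ((θ_k')² - (θ_ℓ')²) = 0`. The first bracket is half the
derivative of the constant `(θ_k')² - (θ_ℓ')²`, hence vanishes, so `2 ρ' (λ_k - λ_ℓ) = 0` and
`ρ' = 0` on the interval. -/

theorem mul_deriv_eq_mul_deriv_of_sq_sub_sq_eqOn_const {s : Set ℝ} {u v : ℝ → ℝ} {c : ℝ}
    (hs : IsOpen s) (hu : DifferentiableOn ℝ u s) (hv : DifferentiableOn ℝ v s)
    (huv : ∀ x ∈ s, u x ^ 2 - v x ^ 2 = c) {x : ℝ} (hx : x ∈ s) :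
    u x * deriv u x = v x * deriv v x := by
  have hmem : s ∈ nhds x := hs.mem_nhds hx
  have hderiv : HasDerivAt (u ^ 2 - v ^ 2)
      ((2 : ℕ) * u x ^ 1 * deriv u x - (2 : ℕ) * v x ^ 1 * deriv v x) x :=
    ((hu.differentiableAt hmem).hasDerivAt.pow 2).sub
      ((hv.differentiableAt hmem).hasDerivAt.pow 2)
  have hconst : HasDerivAt (u ^ 2 - v ^ 2) 0 x :=
    (hasDerivAt_const x c).congr_of_eventuallyEq (Filter.eventually_of_mem hmem huv)
  have h := hderiv.unique hconst
  push_cast at h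
  linarith

theorem eq_zero_of_phase_equations {r r' u u' v v' c : ℝ}
    (hu : r * u' + 2 * r' * u = 0) (hv : r * v' + 2 * r' * v = 0)
    (huv : u ^ 2 - v ^ 2 = c) (huv' : u * u' = v * v') (hc : c ≠ 0) : r' = 0 := by
  have h : 2 * r' * c = 0 := by
    linear_combination u * hu - v * hv - r * huv' - 2 * r' * huv
  simpa [hc] using h

theorem stmt1_general (a b : ℝ) (ρ θk θl : ℝ → ℝ) (lk ll : ℝ) (hne : lk ≠ ll)
    (hρ : ContDiffOn ℝ 1 ρ (Ioo a b))
    (hθk : ContDiffOn ℝ 2 θk (Ioo a b))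
    (hθl : ContDiffOn ℝ 2 θl (Ioo a b))
    (hodek : ∀ x ∈ Ioo a b,
      ρ x * deriv (deriv θk) x + 2 * deriv ρ x * deriv θk x = 0)
    (hodel : ∀ x ∈ Ioo a b,
      ρ x * deriv (deriv θl) x + 2 * deriv ρ x * deriv θl x = 0)
    (heik : ∀ x ∈ Ioo a b, (deriv θk x) ^ 2 - (deriv θl x) ^ 2 = lk - ll) :
    ∃ c : ℝ, ∀ x ∈ Ioo a b, ρ x = c := by
  have hθk' : DifferentiableOn ℝ (deriv θk) (Ioo a b) :=
    (hθk.deriv_of_isOpen isOpen_Ioo (m := 1) le_rfl).differentiableOn one_ne_zero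
  have hθl' : DifferentiableOn ℝ (deriv θl) (Ioo a b) :=
    (hθl.deriv_of_isOpen isOpen_Ioo (m := 1) le_rfl).differentiableOn one_ne_zero
  have hρ' : EqOn (deriv ρ) 0 (Ioo a b) := fun x hx =>
    eq_zero_of_phase_equations (hodek x hx) (hodel x hx) (heik x hx)
      (mul_deriv_eq_mul_deriv_of_sq_sub_sq_eqOn_const isOpen_Ioo hθk' hθl' heik hx)
      (sub_ne_zero.mpr hne)
  exact isOpen_Ioo.exists_is_const_of_deriv_eq_zero isPreconnected_Ioo
    (hρ.differentiableOn one_ne_zero) hρ'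

theorem stmt1 (a b : ℝ) (hab : a < b) (ρ θk θl : ℝ → ℝ) (lk ll : ℝ) (hne : lk ≠ ll)
    (hρ : ContDiffOn ℝ 1 ρ (Ioo a b))
    (hρ0 : ∀ x ∈ Ioo a b, ρ x ≠ 0)
    (hθk : ContDiffOn ℝ 2 θk (Ioo a b))
    (hθl : ContDiffOn ℝ 2 θl (Ioo a b))
    (hodek : ∀ x ∈ Ioo a b,
      ρ x * deriv (deriv θk) x + 2 * deriv ρ x * deriv θk x = 0)
    (hodel : ∀ x ∈ Ioo a b,
      ρ x * deriv (deriv θl) x + 2 * deriv ρ x * deriv θl x = 0)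
    (heik : ∀ x ∈ Ioo a b, (deriv θk x) ^ 2 - (deriv θl x) ^ 2 = lk - ll) :
    ∃ c : ℝ, ∀ x ∈ Ioo a b, ρ x = c :=
  stmt1_general a b ρ θk θl lk ll hne hρ hθk hθl hodek hodel heik
end

section
/- Let ρ : (a,b) → ℝ be C¹ and nowhere zero, θ_k, θ_ℓ : (a,b) → ℝ be C², and λ ∈ ℝ. Assume ρθ_k'' + 2ρ'θ_k' = 0, ρθ_ℓ'' + 2ρ'θ_ℓ' = 0, and (θ_k')² = (θ_ℓ')² on (a,b). Then either θ_k − θ_ℓ is constant on (a,b) or θ_k + θ_ℓ is constant on (a,b). -/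
/-!
Multiplying `ρ θ'' + 2 ρ' θ' = 0` by `ρ` shows that `ρ² θ'` is constant for each phase. Since
`θ_k'² = θ_ℓ'²`, at one point `θ_k' = ± θ_ℓ'`; as `ρ² θ_k'` and `ρ² (± θ_ℓ')` are both constant and
`ρ` never vanishes, `θ_k' = ± θ_ℓ'` everywhere, so `θ_k ∓ θ_ℓ` is constant.
-/

open Set

section
variable {s : Set ℝ} {ρ θ : ℝ → ℝ}

theorem hasDerivAt_sq_mul_deriv_eq_zero (hs : IsOpen s) (hρ : ContDiffOn ℝ 1 ρ s)
    (hθ : ContDiffOn ℝ 2 θ s)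
    (hode : ∀ x ∈ s, ρ x * deriv (deriv θ) x + 2 * deriv ρ x * deriv θ x = 0)
    {x : ℝ} (hx : x ∈ s) : HasDerivAt (fun y ↦ ρ y ^ 2 * deriv θ y) 0 x := by
  have hρx : HasDerivAt ρ (deriv ρ x) x :=
    ((hρ.contDiffAt (hs.mem_nhds hx)).differentiableAt one_ne_zero).hasDerivAt
  have hθ' : ContDiffOn ℝ 1 (deriv θ) s := hθ.deriv_of_isOpen hs (by norm_num)
  have hθx : HasDerivAt (deriv θ) (deriv (deriv θ) x) x :=
    ((hθ'.contDiffAt (hs.mem_nhds hx)).differentiableAt one_ne_zero).hasDerivAt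
  refine ((hρx.fun_pow 2).mul hθx).congr_deriv ?_
  push_cast
  linear_combination ρ x * hode x hx

theorem sq_mul_deriv_eq_of_ode (hs : IsOpen s) (hs' : IsPreconnected s)
    (hρ : ContDiffOn ℝ 1 ρ s) (hθ : ContDiffOn ℝ 2 θ s)
    (hode : ∀ x ∈ s, ρ x * deriv (deriv θ) x + 2 * deriv ρ x * deriv θ x = 0)
    {x₀ : ℝ} (hx₀ : x₀ ∈ s) : ∀ x ∈ s, ρ x ^ 2 * deriv θ x = ρ x₀ ^ 2 * deriv θ x₀ := by
  have hd := fun x (hx : x ∈ s) ↦ hasDerivAt_sq_mul_deriv_eq_zero hs hρ hθ hode hx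
  exact fun x hx ↦ hs.is_const_of_deriv_eq_zero hs'
    (fun y hy ↦ (hd y hy).differentiableAt.differentiableWithinAt) (fun y hy ↦ (hd y hy).deriv)
    hx hx₀

end

theorem eqOn_of_sq_mul_eq_const {s : Set ℝ} {ρ u v : ℝ → ℝ} {x₀ : ℝ}
    (hρ0 : ∀ x ∈ s, ρ x ≠ 0) (hu : ∀ x ∈ s, ρ x ^ 2 * u x = ρ x₀ ^ 2 * u x₀)
    (hv : ∀ x ∈ s, ρ x ^ 2 * v x = ρ x₀ ^ 2 * v x₀) (huv : u x₀ = v x₀) : EqOn u v s :=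
  fun x hx ↦ mul_left_cancel₀ (pow_ne_zero 2 (hρ0 x hx)) (by rw [hu x hx, hv x hx, huv])

theorem stmt2 (a b : ℝ) (hab : a < b) (ρ θk θl : ℝ → ℝ)
    (hρ : ContDiffOn ℝ 1 ρ (Ioo a b))
    (hρ0 : ∀ x ∈ Ioo a b, ρ x ≠ 0)
    (hθk : ContDiffOn ℝ 2 θk (Ioo a b))
    (hθl : ContDiffOn ℝ 2 θl (Ioo a b))
    (hodek : ∀ x ∈ Ioo a b,
      ρ x * deriv (deriv θk) x + 2 * deriv ρ x * deriv θk x = 0)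
    (hodel : ∀ x ∈ Ioo a b,
      ρ x * deriv (deriv θl) x + 2 * deriv ρ x * deriv θl x = 0)
    (heq : ∀ x ∈ Ioo a b, (deriv θk x) ^ 2 = (deriv θl x) ^ 2) :
    (∃ c : ℝ, ∀ x ∈ Ioo a b, θk x - θl x = c) ∨
    (∃ c : ℝ, ∀ x ∈ Ioo a b, θk x + θl x = c) := by
  obtain ⟨x₀, hx₀⟩ := nonempty_Ioo.2 hab
  have hk := sq_mul_deriv_eq_of_ode isOpen_Ioo isPreconnected_Ioo hρ hθk hodek hx₀
  have hl := sq_mul_deriv_eq_of_ode isOpen_Ioo isPreconnected_Ioo hρ hθl hodel hx₀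
  have hθk' := hθk.differentiableOn two_ne_zero
  have hθl' := hθl.differentiableOn two_ne_zero
  rcases sq_eq_sq_iff_eq_or_eq_neg.1 (heq x₀ hx₀) with h | h
  · obtain ⟨c, hc⟩ := isOpen_Ioo.exists_eq_add_of_deriv_eq isPreconnected_Ioo hθk' hθl'
      (eqOn_of_sq_mul_eq_const hρ0 hk hl h)
    exact Or.inl ⟨c, fun x hx ↦ by rw [hc hx]; ring⟩
  · have hl_neg : ∀ x ∈ Ioo a b, ρ x ^ 2 * deriv (-θl) x = ρ x₀ ^ 2 * deriv (-θl) x₀ := by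
      intro x hx
      simp only [deriv.neg', mul_neg, hl x hx]
    obtain ⟨c, hc⟩ := isOpen_Ioo.exists_eq_add_of_deriv_eq isPreconnected_Ioo hθk' hθl'.neg
      (eqOn_of_sq_mul_eq_const hρ0 hk hl_neg (by rw [deriv.neg', h]))
    exact Or.inr ⟨c, fun x hx ↦ by rw [hc hx]; simp⟩
end

section
/- Let V : ℝ → ℝ be bounded from below, C ≠ 0, λ ∈ ℝ, and let ρ : ℝ → (0,∞) be a C² function satisfying −ρ'' + C²ρ⁻³ + Vρ = λρ on ℝ. Then ρ(x) does not tend to 0 as |x| → ∞. -/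
/-!
Where `ρ` is small, the equation gives `ρ'' = C²ρ⁻³ + (V - λ)ρ ≥ C²ρ⁻³ + (inf V - λ)ρ`, and the
right-hand side blows up as `ρ → 0⁺`. So if `ρ → 0` at `+∞`, then eventually `ρ'' ≥ 1`; integrating
twice makes `ρ → +∞`, a contradiction.
-/

open Filter Topology

theorem tendsto_atTop_of_eventually_le_deriv {f : ℝ → ℝ} (hf : Differentiable ℝ f) {c : ℝ}
    (hc : 0 < c) (h : ∀ᶠ x in atTop, c ≤ deriv f x) : Tendsto f atTop atTop := by
  obtain ⟨a, ha⟩ := eventually_atTop.mp h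
  have hlin : ∀ x ≥ a, c * (x - a) ≤ f x - f a := fun x hx =>
    (convex_Ici a).mul_sub_le_image_sub_of_le_deriv hf.continuous.continuousOn
      hf.differentiableOn (fun y hy => ha y (interior_subset hy)) a Set.self_mem_Ici x hx hx
  refine tendsto_atTop_mono' atTop (eventually_ge_atTop a |>.mono fun x hx => ?_)
    (tendsto_atTop_add_const_left atTop (f a)
      ((tendsto_atTop_add_const_right atTop (-a) tendsto_id).const_mul_atTop hc))
  rw [id, ← sub_eq_add_neg]
  linarith [hlin x hx]

theorem tendsto_mul_inv_pow_three_add_mul_nhdsGT_zero {a : ℝ} (ha : 0 < a) (m : ℝ) :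
    Tendsto (fun t : ℝ => a * (t ^ 3)⁻¹ + m * t) (𝓝[>] 0) atTop := by
  have hinv : Tendsto (fun t : ℝ => (t ^ 3)⁻¹) (𝓝[>] 0) atTop := by
    simpa only [Function.comp_def, inv_pow] using
      (tendsto_pow_atTop three_ne_zero).comp (tendsto_inv_nhdsGT_zero (𝕜 := ℝ))
  have hlin : Tendsto (fun t : ℝ => m * t) (𝓝[>] 0) (𝓝 0) := by
    refine tendsto_nhdsWithin_of_tendsto_nhds ?_
    simpa using (continuous_const_mul m).tendsto 0
  exact (hinv.const_mul_atTop ha).atTop_add hlin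

theorem stmt16 (V : ℝ → ℝ) (hV : ∃ mV : ℝ, ∀ x, mV ≤ V x)
    (C lam : ℝ) (hC : C ≠ 0) (ρ : ℝ → ℝ)
    (hρ : ContDiff ℝ 2 ρ) (hpos : ∀ x, 0 < ρ x)
    (hode : ∀ x, -deriv (deriv ρ) x + C ^ 2 * (ρ x ^ 3)⁻¹ + V x * ρ x = lam * ρ x) :
    ¬ Tendsto ρ (cocompact ℝ) (nhds 0) := by
  intro hT
  obtain ⟨mV, hmV⟩ := hV
  have hρ' := contDiff_succ_iff_deriv (n := 1).mp hρ
  have hTop : Tendsto ρ atTop (𝓝 0) := hT.mono_left atTop_le_cocompact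
  have hTop' : Tendsto ρ atTop (𝓝[>] 0) := tendsto_nhdsWithin_iff.mpr ⟨hTop, .of_forall hpos⟩
  have hconvex : ∀ᶠ x in atTop, 1 ≤ deriv (deriv ρ) x := by
    have hblowup := (tendsto_mul_inv_pow_three_add_mul_nhdsGT_zero (by positivity : 0 < C ^ 2)
      (mV - lam)).comp hTop'
    filter_upwards [hblowup.eventually_ge_atTop 1] with x hx
    have hpot := mul_le_mul_of_nonneg_right (sub_le_sub_right (hmV x) lam) (hpos x).le
    rw [Function.comp_apply] at hx
    linarith [hode x]
  have hderiv := tendsto_atTop_of_eventually_le_deriv (hρ'.2.2.differentiable one_ne_zero)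
    one_pos hconvex
  exact not_tendsto_nhds_of_tendsto_atTop
    (tendsto_atTop_of_eventually_le_deriv hρ'.1 one_pos (hderiv.eventually_ge_atTop 1))
    0 hTop
end

section
/- Let ρ : 𝕋 → (0,∞) be a positive C² function on the circle 𝕋 = ℝ/2πℤ, let C = 2π/∫₀^{2π} ρ(y)⁻² dy, let j be a positive integer, define θ(x) = Cj∫₀ˣ ρ(y)⁻² dy and V = ρ''/ρ − C²j²/ρ⁴. Then the function φ = ρe^{iθ} is well-defined on 𝕋 (i.e., θ(2π) − θ(0) = 2πj) and satisfies −φ'' + Vφ = 0 on 𝕋. -/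
/-!
Write `φ = ρ e^{iθ}` with `θ' = c / ρ²`, `c = C j`. Differentiating twice, the imaginary part
`2ρ'θ' + ρθ''` of `φ'' e^{-iθ}` vanishes because `ρ²θ'` is constant, and what remains is
`ρ'' - c²/ρ³ = V ρ`. Since `1/ρ²` is `2π`-periodic, `θ` gains `C j ∫₀^{2π} ρ⁻² = 2πj` over a period,
so `e^{iθ}`, hence `φ`, is `2π`-periodic.
-/

open Complex

theorem HasDerivAt.mul_cexp_I_mul_ofReal {a : ℝ → ℂ} {a' : ℂ} {θ : ℝ → ℝ} {θ' x : ℝ}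
    (ha : HasDerivAt a a' x) (hθ : HasDerivAt θ θ' x) :
    HasDerivAt (fun y => a y * cexp (I * θ y)) ((a' + I * (θ' : ℂ) * a x) * cexp (I * θ x)) x :=
  (ha.mul (hθ.ofReal_comp.const_mul I).cexp).congr_deriv (by ring)

theorem deriv_ofReal_mul_cexp_I_mul {ρ θ : ℝ → ℝ} {c : ℝ} (hρ : Differentiable ℝ ρ)
    (hρ0 : ∀ x, ρ x ≠ 0) (hθ : ∀ x, HasDerivAt θ (c / ρ x ^ 2) x) :
    deriv (fun y => (ρ y : ℂ) * cexp (I * θ y))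
      = fun y => (((deriv ρ y : ℝ) : ℂ) + I * c / ρ y) * cexp (I * θ y) := by
  funext x
  refine (((hρ x).hasDerivAt.ofReal_comp.mul_cexp_I_mul_ofReal (hθ x)).congr_deriv ?_).deriv
  have : (ρ x : ℂ) ≠ 0 := ofReal_ne_zero.mpr (hρ0 x)
  push_cast
  field_simp

theorem deriv_deriv_ofReal_mul_cexp_I_mul {ρ θ : ℝ → ℝ} {c x : ℝ} (hρ : Differentiable ℝ ρ)
    (hρ' : DifferentiableAt ℝ (deriv ρ) x) (hρ0 : ∀ x, ρ x ≠ 0)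
    (hθ : ∀ x, HasDerivAt θ (c / ρ x ^ 2) x) :
    deriv (deriv fun y => (ρ y : ℂ) * cexp (I * θ y)) x
      = ((deriv (deriv ρ) x - c ^ 2 / ρ x ^ 3 : ℝ) : ℂ) * cexp (I * θ x) := by
  have hρx : (ρ x : ℂ) ≠ 0 := ofReal_ne_zero.mpr (hρ0 x)
  have hamp : HasDerivAt (fun y => ((deriv ρ y : ℝ) : ℂ) + I * c / ρ y)
      (((deriv (deriv ρ) x : ℝ) : ℂ) + (0 * ρ x - I * c * deriv ρ x) / (ρ x : ℂ) ^ 2) x :=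
    hρ'.hasDerivAt.ofReal_comp.add
      ((hasDerivAt_const x (I * c)).div (hρ x).hasDerivAt.ofReal_comp hρx)
  rw [deriv_ofReal_mul_cexp_I_mul hρ hρ0 hθ, (hamp.mul_cexp_I_mul_ofReal (hθ x)).deriv]
  push_cast
  field_simp
  ring_nf
  rw [I_sq]
  ring

theorem cexp_I_mul_ofReal_add_two_pi_mul_natCast (t : ℝ) (n : ℕ) :
    cexp (I * ((t + 2 * Real.pi * n : ℝ) : ℂ)) = cexp (I * t) := by
  push_cast
  rw [mul_add, exp_add, show I * (2 * Real.pi * n) = n * (2 * Real.pi * I) by ring,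
    exp_nat_mul_two_pi_mul_I, mul_one]

theorem stmt17_general (ρ : ℝ → ℝ) (hρ : ContDiff ℝ 2 ρ) (hpos : ∀ x, 0 < ρ x)
    (hper : ∀ x, ρ (x + 2 * Real.pi) = ρ x)
    (j : ℕ)
    (C : ℝ) (hC : C = 2 * Real.pi / ∫ y in (0 : ℝ)..(2 * Real.pi), (ρ y ^ 2)⁻¹)
    (θ : ℝ → ℝ) (hθ : ∀ x, θ x = C * j * ∫ y in (0 : ℝ)..x, (ρ y ^ 2)⁻¹)
    (V : ℝ → ℝ) (hV : ∀ x, V x = deriv (deriv ρ) x / ρ x - C ^ 2 * j ^ 2 / ρ x ^ 4)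
    (φ : ℝ → ℂ) (hφ : ∀ x, φ x = (ρ x : ℂ) * Complex.exp (Complex.I * θ x)) :
    θ (2 * Real.pi) - θ 0 = 2 * Real.pi * j ∧
    (∀ x, φ (x + 2 * Real.pi) = φ x) ∧
    (∀ x : ℝ, -deriv (deriv φ) x + (V x : ℂ) * φ x = 0) := by
  have hρ0 : ∀ x, ρ x ≠ 0 := fun x => (hpos x).ne'
  have hcont : Continuous fun y => (ρ y ^ 2)⁻¹ :=
    (hρ.continuous.pow 2).inv₀ fun y => pow_ne_zero 2 (hρ0 y)
  have hintegral_ne : ∫ y in (0 : ℝ)..(2 * Real.pi), (ρ y ^ 2)⁻¹ ≠ 0 :=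
    (intervalIntegral.intervalIntegral_pos_of_pos (hcont.intervalIntegrable _ _)
      (fun y => by have := hpos y; positivity) Real.two_pi_pos).ne'
  have hCP : C * ∫ y in (0 : ℝ)..(2 * Real.pi), (ρ y ^ 2)⁻¹ = 2 * Real.pi := by
    rw [hC]
    exact div_mul_cancel₀ _ hintegral_ne
  have hinv_per : Function.Periodic (fun y => (ρ y ^ 2)⁻¹) (2 * Real.pi) := fun y => by
    simp only [hper y]
  have hθper : ∀ x, θ (x + 2 * Real.pi) = θ x + 2 * Real.pi * j := fun x => by
    have := hinv_per.intervalIntegral_add_eq_add 0 x fun _ _ => hcont.intervalIntegrable _ _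
    rw [zero_add] at this
    rw [hθ, hθ, this]
    linear_combination (j : ℝ) * hCP
  have hθ' : ∀ x, HasDerivAt θ (C * j / ρ x ^ 2) x := fun x => by
    rw [show θ = _ from funext hθ, div_eq_mul_inv]
    exact (hcont.integral_hasStrictDerivAt 0 x).hasDerivAt.const_mul _
  have hφeq : φ = fun y => (ρ y : ℂ) * cexp (I * θ y) := funext hφ
  refine ⟨by linarith [zero_add (2 * Real.pi) ▸ hθper 0], fun x => ?_, fun x => ?_⟩
  · rw [hφ, hφ, hper, hθper, cexp_I_mul_ofReal_add_two_pi_mul_natCast]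
  · rw [hφeq, deriv_deriv_ofReal_mul_cexp_I_mul (hρ.differentiable two_ne_zero)
      (hρ.differentiable_deriv_two x) hρ0 hθ', hV]
    have : (ρ x : ℂ) ≠ 0 := ofReal_ne_zero.mpr (hρ0 x)
    push_cast
    field_simp
    ring

theorem stmt17 (ρ : ℝ → ℝ) (hρ : ContDiff ℝ 2 ρ) (hpos : ∀ x, 0 < ρ x)
    (hper : ∀ x, ρ (x + 2 * Real.pi) = ρ x)
    (j : ℕ) (hj : 1 ≤ j)
    (C : ℝ) (hC : C = 2 * Real.pi / ∫ y in (0 : ℝ)..(2 * Real.pi), (ρ y ^ 2)⁻¹)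
    (θ : ℝ → ℝ) (hθ : ∀ x, θ x = C * j * ∫ y in (0 : ℝ)..x, (ρ y ^ 2)⁻¹)
    (V : ℝ → ℝ) (hV : ∀ x, V x = deriv (deriv ρ) x / ρ x - C ^ 2 * j ^ 2 / ρ x ^ 4)
    (φ : ℝ → ℂ) (hφ : ∀ x, φ x = (ρ x : ℂ) * Complex.exp (Complex.I * θ x)) :
    θ (2 * Real.pi) - θ 0 = 2 * Real.pi * j ∧
    (∀ x, φ (x + 2 * Real.pi) = φ x) ∧
    (∀ x : ℝ, -deriv (deriv φ) x + (V x : ℂ) * φ x = 0) :=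
  stmt17_general ρ hρ hpos hper j C hC θ hθ V hV φ hφ
end
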